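/- arXiv:1602.05230 — 6 statements merged into one kernel-verified Lean document; each statement's English description precedes it below -/
import Mathlib

section
/- Let x be a point on the unit sphere S² with geodesic metric ρ, let δ ∈ (0, π/4), and let z, w ∈ B(x,δ). For t ∈ [0,1], let z_t := t z ⊕ (1-t) x and w_t := t w ⊕ (1-t) x be the points at parameter t along minimizing geodesics from x to z and from x to w respectively. Then ρ(z_t, w_t) ≤ ρ(z, w) for all t ∈ [0,1]. -/
open Metric

/-- The geodesic (great-circle) distance on the unit sphere in `ℝ³`. -/
noncomputable def sphereDist (a b : Metric.sphere (0 : EuclideanSpace ℝ (Fin 3)) 1) : ℝ :=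
  InnerProductGeometry.angle (a : EuclideanSpace ℝ (Fin 3)) (b : EuclideanSpace ℝ (Fin 3))

/-- `p` is the point `t u ⊕ (1-t) v` on a minimizing geodesic from `v` to `u`:
it lies at distance `t·ρ(v,u)` from `v` and `(1-t)·ρ(v,u)` from `u`. -/
def IsGeodesicPtFrom (v u : Metric.sphere (0 : EuclideanSpace ℝ (Fin 3)) 1) (t : ℝ)
    (p : Metric.sphere (0 : EuclideanSpace ℝ (Fin 3)) 1) : Prop :=
  sphereDist v p = t * sphereDist v u ∧ sphereDist p u = (1 - t) * sphereDist v u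

namespace Stmt6Aux

open Real InnerProductGeometry RealInnerProductSpace

local notation "E3" => EuclideanSpace ℝ (Fin 3)
local notation "S2" => Metric.sphere (0 : E3) 1

lemma norm_coe (a : S2) : ‖(a : E3)‖ = 1 := by
  have := a.2
  rwa [mem_sphere_zero_iff_norm] at this

lemma coe_ne_zero (a : S2) : (a : E3) ≠ 0 := by
  intro h
  have := norm_coe a
  rw [h, norm_zero] at this
  norm_num at this

lemma inner_eq_cos (a b : S2) :
    ⟪(a : E3), (b : E3)⟫ = Real.cos (sphereDist a b) := by
  rw [sphereDist, InnerProductGeometry.cos_angle, norm_coe, norm_coe]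
  ring

lemma inner_self_coe (a : S2) : ⟪(a : E3), (a : E3)⟫ = 1 := by
  rw [real_inner_self_eq_norm_sq, norm_coe]; norm_num

lemma sphereDist_nonneg (a b : S2) : 0 ≤ sphereDist a b := angle_nonneg _ _

lemma sphereDist_le_pi (a b : S2) : sphereDist a b ≤ π := angle_le_pi _ _

lemma sphereDist_comm (a b : S2) : sphereDist a b = sphereDist b a := angle_comm _ _

lemma sphereDist_self (a : S2) : sphereDist a a = 0 :=
  InnerProductGeometry.angle_self (coe_ne_zero a)

lemma eq_of_sphereDist_eq_zero {a b : S2} (h : sphereDist a b = 0) : (a : E3) = b := by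
  rw [sphereDist, angle_eq_zero_iff] at h
  obtain ⟨ha, r, hr, hb⟩ := h
  have : ‖(b : E3)‖ = r * ‖(a : E3)‖ := by rw [hb, norm_smul, Real.norm_eq_abs, abs_of_pos hr]
  rw [norm_coe, norm_coe, mul_one] at this
  rw [hb, ← this, one_smul]

lemma key_ineq {a b c t : ℝ} (ht0 : 0 ≤ t) (ht1 : t ≤ 1)
    (ha0 : 0 ≤ a) (ha : a ≤ π/2) (hb0 : 0 ≤ b) (hb : b ≤ π/2)
    (hc1 : c ≤ 1) :
    Real.cos a * Real.cos b + Real.sin a * Real.sin b * c ≤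
      Real.cos (t*a) * Real.cos (t*b) + Real.sin (t*a) * Real.sin (t*b) * c := by
  have e1 := Real.cos_sub a b
  have e2 := Real.cos_sub (t*a) (t*b)
  have habs : |t*a - t*b| ≤ |a - b| := by
    rw [← mul_sub, abs_mul, abs_of_nonneg ht0]
    nlinarith [abs_nonneg (a - b)]
  have hpi : |a - b| ≤ π := by
    have := Real.pi_pos
    rw [abs_le]; constructor <;> nlinarith
  have h1 : Real.cos (a - b) ≤ Real.cos (t*a - t*b) := by
    have := Real.cos_le_cos_of_nonneg_of_le_pi (abs_nonneg (t*a - t*b)) hpi habs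
    rwa [Real.cos_abs, Real.cos_abs] at this
  have hsa : Real.sin (t*a) ≤ Real.sin a :=
    Real.sin_le_sin_of_le_of_le_pi_div_two (by nlinarith [Real.pi_pos]) ha (by nlinarith)
  have hsb : Real.sin (t*b) ≤ Real.sin b :=
    Real.sin_le_sin_of_le_of_le_pi_div_two (by nlinarith [Real.pi_pos]) hb (by nlinarith)
  have hsa0 : 0 ≤ Real.sin (t*a) := Real.sin_nonneg_of_nonneg_of_le_pi (by positivity)
    (by nlinarith [Real.pi_pos])
  have hsb0 : 0 ≤ Real.sin (t*b) := Real.sin_nonneg_of_nonneg_of_le_pi (by positivity)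
    (by nlinarith [Real.pi_pos])
  have hprod : Real.sin (t*a) * Real.sin (t*b) ≤ Real.sin a * Real.sin b :=
    mul_le_mul hsa hsb hsb0 (le_trans hsa0 hsa)
  nlinarith [mul_le_mul_of_nonneg_right hprod (by linarith : (0:ℝ) ≤ 1 - c)]

lemma norm_u {x z : S2} {d : ℝ} (hd0 : 0 < d) (hdpi : d < π)
    (hxz : sphereDist x z = d) :
    ‖(Real.sin d)⁻¹ • ((z : E3) - Real.cos d • (x : E3))‖ = 1 := by
  have hsind : 0 < Real.sin d := Real.sin_pos_of_pos_of_lt_pi hd0 hdpi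
  have hxz' : ⟪(x : E3), (z : E3)⟫ = Real.cos d := by rw [inner_eq_cos, hxz]
  have hzx' : ⟪(z : E3), (x : E3)⟫ = Real.cos d := by rw [real_inner_comm]; exact hxz'
  have huu : ⟪(z : E3) - Real.cos d • (x : E3), (z : E3) - Real.cos d • (x : E3)⟫
      = Real.sin d ^ 2 := by
    simp only [inner_sub_left, inner_sub_right, inner_smul_left, inner_smul_right,
      RCLike.conj_to_real, inner_self_coe, hxz', hzx']
    nlinarith [Real.sin_sq_add_cos_sq d]
  have h1 : ‖(z : E3) - Real.cos d • (x : E3)‖ = Real.sin d := by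
    have h2 : ‖(z : E3) - Real.cos d • (x : E3)‖^2 = Real.sin d ^ 2 := by
      rw [← real_inner_self_eq_norm_sq, huu]
    nlinarith [norm_nonneg ((z : E3) - Real.cos d • (x : E3))]
  rw [norm_smul, h1, Real.norm_eq_abs, abs_inv, abs_of_pos hsind, inv_mul_cancel₀ hsind.ne']

lemma decomp {x z p : S2} {d s : ℝ} (hd0 : 0 < d) (hdpi : d < π)
    (hxz : sphereDist x z = d) (hxp : sphereDist x p = s) (hpz : sphereDist p z = d - s)
    (hs0 : 0 ≤ s) (hspi : s ≤ π) :
    (p : E3) = Real.cos s • (x : E3) +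
      Real.sin s • ((Real.sin d)⁻¹ • ((z : E3) - Real.cos d • (x : E3))) := by
  set u : E3 := (Real.sin d)⁻¹ • ((z : E3) - Real.cos d • (x : E3)) with hu
  have hsind : 0 < Real.sin d := Real.sin_pos_of_pos_of_lt_pi hd0 hdpi
  have hxz' : ⟪(x : E3), (z : E3)⟫ = Real.cos d := by rw [inner_eq_cos, hxz]
  have hxp' : ⟪(x : E3), (p : E3)⟫ = Real.cos s := by rw [inner_eq_cos, hxp]
  have hpx' : ⟪(p : E3), (x : E3)⟫ = Real.cos s := by rw [real_inner_comm]; exact hxp'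
  have hpz' : ⟪(p : E3), (z : E3)⟫ = Real.cos (d - s) := by rw [inner_eq_cos, hpz]
  set r : E3 := (p : E3) - Real.cos s • (x : E3) with hr
  have hrr : ⟪r, r⟫ = Real.sin s ^ 2 := by
    simp only [hr, inner_sub_left, inner_sub_right, inner_smul_left, inner_smul_right,
      RCLike.conj_to_real, inner_self_coe, hxp', hpx']
    nlinarith [Real.sin_sq_add_cos_sq s]
  have hnr : ‖r‖ = Real.sin s := by
    have h1 : ‖r‖^2 = Real.sin s ^ 2 := by rw [← real_inner_self_eq_norm_sq, hrr]
    have := Real.sin_nonneg_of_nonneg_of_le_pi hs0 hspi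
    nlinarith [norm_nonneg r]
  have hnu : ‖u‖ = 1 := norm_u hd0 hdpi hxz
  have hru : ⟪r, u⟫ = Real.sin s := by
    simp only [hr, hu, inner_smul_right, inner_sub_left, inner_sub_right, inner_smul_left,
      inner_smul_right, RCLike.conj_to_real, inner_self_coe, hpz', hxp', hxz', hpx']
    rw [Real.cos_sub]
    field_simp
    ring
  have heq : ⟪r, u⟫ = ‖r‖ * ‖u‖ := by rw [hru, hnr, hnu, mul_one]
  have h2 := inner_eq_norm_mul_iff_real.mp heq
  rw [hnu, hnr, one_smul] at h2
  have h3 : (p : E3) - Real.cos s • (x : E3) = Real.sin s • u := h2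
  linear_combination (norm := module) h3

set_option maxHeartbeats 1000000 in
lemma main (x z w : S2) (δ : ℝ)
    (hδ0 : 0 < δ) (hδ : δ < Real.pi / 4)
    (hz : sphereDist x z < δ) (hw : sphereDist x w < δ)
    (t : ℝ) (ht0 : 0 ≤ t) (ht1 : t ≤ 1)
    (zt wt : S2)
    (hzt : IsGeodesicPtFrom x z t zt) (hwt : IsGeodesicPtFrom x w t wt) :
    sphereDist zt wt ≤ sphereDist z w := by
  obtain ⟨hzt1, hzt2⟩ := hzt
  obtain ⟨hwt1, hwt2⟩ := hwt
  have hpi := Real.pi_pos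
  set a := sphereDist x z with hadef
  set b := sphereDist x w with hbdef
  have ha0 : 0 ≤ a := sphereDist_nonneg _ _
  have hb0 : 0 ≤ b := sphereDist_nonneg _ _
  have hale : a < π/4 := lt_trans hz hδ
  have hble : b < π/4 := lt_trans hw hδ
  have key : Real.cos (sphereDist z w) ≤ Real.cos (sphereDist zt wt) →
      sphereDist zt wt ≤ sphereDist z w := by
    intro h
    by_contra hcon
    push_neg at hcon
    have := Real.strictAntiOn_cos ⟨sphereDist_nonneg z w, sphereDist_le_pi z w⟩
      ⟨sphereDist_nonneg zt wt, sphereDist_le_pi zt wt⟩ hcon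
    linarith
  apply key
  rw [← inner_eq_cos, ← inner_eq_cos]
  rcases eq_or_lt_of_le ht0 with ht0' | ht0'
  · have hz0 : sphereDist x zt = 0 := by rw [hzt1, ← ht0', zero_mul]
    have hw0 : sphereDist x wt = 0 := by rw [hwt1, ← ht0', zero_mul]
    have e1 := eq_of_sphereDist_eq_zero hz0
    have e2 := eq_of_sphereDist_eq_zero hw0
    rw [← e1, ← e2, inner_self_coe]
    have := real_inner_le_norm (z : E3) (w : E3)
    rw [norm_coe, norm_coe] at this
    nlinarith
  rcases eq_or_lt_of_le ha0 with ha0' | ha0'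
  · have hzx := eq_of_sphereDist_eq_zero (id ha0'.symm : sphereDist x z = 0)
    have hztx : sphereDist x zt = 0 := by rw [hzt1, ← ha0', mul_zero]
    have e1 := eq_of_sphereDist_eq_zero hztx
    rw [← e1, ← hzx]
    rw [inner_eq_cos, inner_eq_cos]
    apply Real.cos_le_cos_of_nonneg_of_le_pi (sphereDist_nonneg _ _) (sphereDist_le_pi _ _)
    rw [hwt1]
    nlinarith
  rcases eq_or_lt_of_le hb0 with hb0' | hb0'
  · have hwx := eq_of_sphereDist_eq_zero (id hb0'.symm : sphereDist x w = 0)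
    have hwtx : sphereDist x wt = 0 := by rw [hwt1, ← hb0', mul_zero]
    have e2 := eq_of_sphereDist_eq_zero hwtx
    rw [← e2, ← hwx]
    rw [real_inner_comm, real_inner_comm (z : E3), inner_eq_cos, inner_eq_cos]
    apply Real.cos_le_cos_of_nonneg_of_le_pi (sphereDist_nonneg _ _) (sphereDist_le_pi _ _)
    rw [sphereDist_comm zt x, sphereDist_comm z x, hzt1]
    nlinarith
  -- main case
  have hapi : a < π := by nlinarith
  have hbpi : b < π := by nlinarith
  have hdz := decomp ha0' hapi rfl hzt1 (by rw [hzt2]; ring) (by nlinarith) (by nlinarith)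
  have hdw := decomp hb0' hbpi rfl hwt1 (by rw [hwt2]; ring) (by nlinarith) (by nlinarith)
  have hdz1 := decomp ha0' hapi rfl (rfl : sphereDist x z = a)
    (by rw [sphereDist_self]; ring) ha0 (le_of_lt hapi)
  have hdw1 := decomp hb0' hbpi rfl (rfl : sphereDist x w = b)
    (by rw [sphereDist_self]; ring) hb0 (le_of_lt hbpi)
  set u : E3 := (Real.sin a)⁻¹ • ((z : E3) - Real.cos a • (x : E3)) with hu
  set v : E3 := (Real.sin b)⁻¹ • ((w : E3) - Real.cos b • (x : E3)) with hv
  have hnu : ‖u‖ = 1 := norm_u ha0' hapi rfl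
  have hnv : ‖v‖ = 1 := norm_u hb0' hbpi rfl
  have hxu : ⟪(x : E3), u⟫ = 0 := by
    have hxz' : ⟪(x : E3), (z : E3)⟫ = Real.cos a := by rw [inner_eq_cos]
    simp only [hu, inner_smul_right, inner_sub_right, inner_smul_right, inner_self_coe, hxz']
    ring
  have hxv : ⟪(x : E3), v⟫ = 0 := by
    have hxw' : ⟪(x : E3), (w : E3)⟫ = Real.cos b := by rw [inner_eq_cos]
    simp only [hv, inner_smul_right, inner_sub_right, inner_smul_right, inner_self_coe, hxw']
    ring
  have hux : ⟪u, (x : E3)⟫ = 0 := by rw [real_inner_comm]; exact hxu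
  have hvx : ⟪v, (x : E3)⟫ = 0 := by rw [real_inner_comm]; exact hxv
  have hc1 : ⟪u, v⟫ ≤ 1 := by
    have := real_inner_le_norm u v
    rwa [hnu, hnv, one_mul] at this
  have e1 : ⟪(zt : E3), (wt : E3)⟫ =
      Real.cos (t*a) * Real.cos (t*b) + Real.sin (t*a) * Real.sin (t*b) * ⟪u, v⟫ := by
    rw [hdz, hdw]
    simp only [inner_add_left, inner_add_right, inner_smul_left, inner_smul_right,
      RCLike.conj_to_real, inner_self_coe, hxu, hxv, hux, hvx]
    ring
  have e2 : ⟪(z : E3), (w : E3)⟫ =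
      Real.cos a * Real.cos b + Real.sin a * Real.sin b * ⟪u, v⟫ := by
    nth_rewrite 1 [hdz1, hdw1]
    simp only [inner_add_left, inner_add_right, inner_smul_left, inner_smul_right,
      RCLike.conj_to_real, inner_self_coe, hxu, hxv, hux, hvx]
    ring
  rw [e1, e2]
  exact key_ineq ht0 ht1 ha0 (by nlinarith) hb0 (by nlinarith) hc1

end Stmt6Aux

/-- Let `x ∈ S²`, `δ ∈ (0, π/4)` and `z, w` in the geodesic ball `B(x,δ)`.
For `t ∈ [0,1]`, if `z_t = t z ⊕ (1-t) x` and `w_t = t w ⊕ (1-t) x` are the points at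
parameter `t` along minimizing geodesics from `x` to `z`, resp. `w`, then
`ρ(z_t, w_t) ≤ ρ(z, w)`. -/
theorem stmt6 (x z w : Metric.sphere (0 : EuclideanSpace ℝ (Fin 3)) 1) (δ : ℝ)
    (hδ0 : 0 < δ) (hδ : δ < Real.pi / 4)
    (hz : sphereDist x z < δ) (hw : sphereDist x w < δ)
    (t : ℝ) (ht0 : 0 ≤ t) (ht1 : t ≤ 1)
    (zt wt : Metric.sphere (0 : EuclideanSpace ℝ (Fin 3)) 1)
    (hzt : IsGeodesicPtFrom x z t zt) (hwt : IsGeodesicPtFrom x w t wt) :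
    sphereDist zt wt ≤ sphereDist z w :=
  Stmt6Aux.main x z w δ hδ0 hδ hz hw t ht0 ht1 zt wt hzt hwt
end

section
/- Let f : [v,w] → Y be a Lipschitz mapping from a compact real interval [v,w] ⊂ ℝ into a metric space (Y,ρ), and let L' > 0. Suppose that for every u₀ ∈ [v,w), liminf_{t→0⁺} ρ(f(u₀+t(w-u₀)),f(u₀))/(t(w-u₀)) < L'. Then ρ(f(w),f(v)) ≤ L'(w-v). -/
open Metric Set Filter

/-- If `f : [v,w] → Y` is Lipschitz and for every `u₀ ∈ [v,w)` the lower right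
directional slope towards `w` satisfies
`liminf_{t→0⁺} dist(f(u₀ + t(w-u₀)), f(u₀)) / (t(w-u₀)) < L'`,
then `dist(f(w), f(v)) ≤ L'·(w-v)`. -/
theorem stmt9 {Y : Type*} [MetricSpace Y] (v w : ℝ) (hvw : v ≤ w)
    (f : ℝ → Y) (K : NNReal) (hf : LipschitzOnWith K f (Icc v w))
    (L' : ℝ) (hL' : 0 < L')
    (h : ∀ u₀ ∈ Ico v w,
      Filter.liminf (fun t : ℝ => dist (f (u₀ + t * (w - u₀))) (f u₀) / (t * (w - u₀)))
        (nhdsWithin 0 (Ioi 0)) < L') :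
    dist (f w) (f v) ≤ L' * (w - v) := by
  set S : Set ℝ := {u ∈ Icc v w | dist (f u) (f v) ≤ L' * (u - v)} with hS
  have hScl : IsClosed S := by
    apply isClosed_Icc.isClosed_le
    · exact (continuous_id.dist continuous_const).comp_continuousOn hf.continuousOn
    · exact (continuousOn_const.mul (continuousOn_id.sub continuousOn_const))
  have hvS : v ∈ S := by
    refine ⟨⟨le_refl v, hvw⟩, ?_⟩
    simp
  have hbdd : BddAbove S := ⟨w, fun u hu => hu.1.2⟩
  set u₀ := sSup S with hu₀
  have hu₀S : u₀ ∈ S := hScl.csSup_mem ⟨v, hvS⟩ hbdd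
  have hu₀le : u₀ ≤ w := hu₀S.1.2
  have hvu₀ : v ≤ u₀ := hu₀S.1.1
  have hu₀w : u₀ = w := by
    by_contra hne
    have hlt : u₀ < w := lt_of_le_of_ne hu₀le hne
    have hlim := h u₀ ⟨hvu₀, hlt⟩
    have hbound : Filter.IsBoundedUnder (· ≥ ·)
        (nhdsWithin (0:ℝ) (Ioi 0))
        (fun t : ℝ => dist (f (u₀ + t * (w - u₀))) (f u₀) / (t * (w - u₀))) := by
      refine ⟨0, Filter.eventually_map.2 ?_⟩
      filter_upwards [self_mem_nhdsWithin] with t (ht : t ∈ Ioi (0:ℝ))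
      exact div_nonneg dist_nonneg (le_of_lt (mul_pos ht (sub_pos.2 hlt)))
    have hev : ∀ᶠ t : ℝ in nhdsWithin 0 (Ioi 0), t < 1 :=
      eventually_nhdsWithin_of_eventually_nhds (eventually_lt_nhds one_pos)
    have hbound2 : Filter.IsBoundedUnder (· ≤ ·)
        (nhdsWithin (0:ℝ) (Ioi 0))
        (fun t : ℝ => dist (f (u₀ + t * (w - u₀))) (f u₀) / (t * (w - u₀))) := by
      refine ⟨(K:ℝ), Filter.eventually_map.2 ?_⟩
      filter_upwards [self_mem_nhdsWithin, hev] with t (ht : t ∈ Ioi (0:ℝ)) ht1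
      have htpos : (0:ℝ) < t := ht
      have hmulpos : 0 < t * (w - u₀) := mul_pos htpos (sub_pos.2 hlt)
      have hmem : u₀ + t * (w - u₀) ∈ Icc v w := by
        constructor
        · linarith
        · nlinarith
      have hd := hf.dist_le_mul _ hmem _ hu₀S.1
      rw [Real.dist_eq] at hd
      have : |u₀ + t * (w - u₀) - u₀| = t * (w - u₀) := by
        rw [add_sub_cancel_left, abs_of_pos hmulpos]
      rw [this] at hd
      rw [div_le_iff₀ hmulpos]
      exact hd
    have hfreq := Filter.frequently_lt_of_liminf_lt hbound2.isCoboundedUnder_ge hlim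
    obtain ⟨t, ⟨⟨htlt, ht1⟩, htpos⟩⟩ :=
      ((hfreq.and_eventually hev).and_eventually self_mem_nhdsWithin).exists
    have htpos' : (0:ℝ) < t := htpos
    have hmulpos : 0 < t * (w - u₀) := mul_pos htpos' (sub_pos.2 hlt)
    set u₁ := u₀ + t * (w - u₀) with hu₁
    have hu₁w : u₁ ≤ w := by
      have : t * (w - u₀) ≤ 1 * (w - u₀) :=
        mul_le_mul_of_nonneg_right (le_of_lt ht1) (le_of_lt (sub_pos.2 hlt))
      simp only [one_mul] at this
      linarith
    have hdist : dist (f u₁) (f u₀) < L' * (t * (w - u₀)) :=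
      (div_lt_iff₀ hmulpos).1 htlt
    have hu₁S : u₁ ∈ S := by
      refine ⟨⟨by linarith, hu₁w⟩, ?_⟩
      calc dist (f u₁) (f v) ≤ dist (f u₁) (f u₀) + dist (f u₀) (f v) := dist_triangle _ _ _
        _ ≤ L' * (t * (w - u₀)) + L' * (u₀ - v) := add_le_add (le_of_lt hdist) hu₀S.2
        _ = L' * (u₁ - v) := by ring
    have : u₁ ≤ u₀ := le_csSup hbdd hu₁S
    linarith
  have := hu₀S.2
  rwa [hu₀w] at this
end

section
/- Let C be a nonempty, non-singleton ρ_X-convex subset of a geodesic metric space X, let f : C → Y be a Lipschitz mapping into a metric space Y, and let 0 < L < lip(f). Then there exist points u₀, u₁ ∈ C such that liminf_{t→0⁺} ρ_Y(f((1-t)u₀ ⊕ t u₁), f(u₀)) / (t ρ_X(u₀,u₁)) > L. -/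
open Metric Set Filter Topology

/-!
Pick `x, y ∈ C` with slope `> l > L` and a segment `c` from `x` to `y`, of length `d`. The function
`s ↦ ρ(f (c s), f y) + l s` is larger at `0` than at `d`, so it has a strict record low `s₀ ∈ (0, d]`:
a value below all earlier ones. By the triangle inequality every earlier point `c s` then satisfies
`ρ(f (c s), f (c s₀)) > l (s₀ - s)`, so `u₀ = c s₀`, `u₁ = x` with the reversed segment works.
-/

theorem ContinuousOn.exists_mem_Ioc_forall_mem_Ico_lt {h : ℝ → ℝ} {a b : ℝ} (hab : a ≤ b)
    (hh : ContinuousOn h (Icc a b)) (hba : h b < h a) :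
    ∃ s₀ ∈ Ioc a b, ∀ s ∈ Ico a s₀, h s₀ < h s := by
  set S := Icc a b ∩ h ⁻¹' Iic (h b)
  have hS : IsCompact S := isCompact_Icc.of_isClosed_subset
    (hh.preimage_isClosed_of_isClosed isClosed_Icc isClosed_Iic) inter_subset_left
  obtain ⟨s₀, ⟨hs₀ab, hs₀b⟩, hleast⟩ := hS.exists_isLeast ⟨b, ⟨hab, le_rfl⟩, le_refl (h b)⟩
  have hs₀a : s₀ ≠ a := by
    rintro rfl
    exact lt_irrefl _ ((mem_Iic.1 hs₀b).trans_lt hba)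
  refine ⟨s₀, ⟨hs₀ab.1.lt_of_ne' hs₀a, hs₀ab.2⟩, fun s hs => ?_⟩
  have hsS : s ∉ S := fun hsS => (hleast hsS).not_gt hs.2
  have hbs : h b < h s := by
    by_contra! hsb
    exact hsS ⟨⟨hs.1, hs.2.le.trans hs₀ab.2⟩, hsb⟩
  exact (mem_Iic.1 hs₀b).trans_lt hbs

theorem ContinuousOn.exists_mem_Ioc_forall_mem_Ico_mul_lt_dist {Y : Type*} [PseudoMetricSpace Y]
    {g : ℝ → Y} {a b l : ℝ} (hab : a ≤ b) (hg : ContinuousOn g (Icc a b))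
    (hslope : l * (b - a) < dist (g a) (g b)) :
    ∃ s₀ ∈ Ioc a b, ∀ s ∈ Ico a s₀, l * (s₀ - s) < dist (g s) (g s₀) := by
  obtain ⟨s₀, hs₀, hlow⟩ := ContinuousOn.exists_mem_Ioc_forall_mem_Ico_lt
    (h := fun s => dist (g s) (g b) + l * s) hab
    (((continuous_id.dist continuous_const).comp_continuousOn hg).add
      (continuousOn_const.mul continuousOn_id))
    (show dist (g b) (g b) + l * b < dist (g a) (g b) + l * a by rw [dist_self]; linarith)
  refine ⟨s₀, hs₀, fun s hs => ?_⟩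
  have hrec := hlow s hs
  have htri := dist_triangle (g s) (g s₀) (g b)
  linarith

section Segment

variable {X Y : Type*} [MetricSpace X] [MetricSpace Y]

def IsSegmentIn (C : Set X) (c : ℝ → X) (x y : X) : Prop :=
  c 0 = x ∧ c (dist x y) = y ∧ (∀ s ∈ Icc (0 : ℝ) (dist x y), c s ∈ C) ∧
    ∀ s ∈ Icc (0 : ℝ) (dist x y), ∀ t ∈ Icc (0 : ℝ) (dist x y), dist (c s) (c t) = |s - t|

namespace IsSegmentIn

variable {C : Set X} {c : ℝ → X} {x y : X}

theorem dist_apply_zero (hc : IsSegmentIn C c x y) {s : ℝ} (hs : s ∈ Icc 0 (dist x y)) :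
    dist (c s) x = s := by
  rw [← hc.1, hc.2.2.2 s hs 0 ⟨le_rfl, dist_nonneg⟩, sub_zero, abs_of_nonneg hs.1]

theorem reverse_restrict (hc : IsSegmentIn C c x y) {s₀ : ℝ} (hs₀ : s₀ ∈ Icc 0 (dist x y)) :
    IsSegmentIn C (fun σ => c (s₀ - σ)) (c s₀) x := by
  have hmem : ∀ σ ∈ Icc 0 s₀, s₀ - σ ∈ Icc 0 (dist x y) := fun σ hσ =>
    ⟨by linarith [hσ.2], by linarith [hσ.1, hs₀.2]⟩
  rw [IsSegmentIn, hc.dist_apply_zero hs₀]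
  obtain ⟨hc0, -, hcC, hiso⟩ := hc
  refine ⟨by simp, by simp [hc0], fun σ hσ => hcC _ (hmem σ hσ), fun σ hσ τ hτ => ?_⟩
  rw [hiso _ (hmem σ hσ) _ (hmem τ hτ), ← abs_neg]
  ring_nf

variable {f : X → Y} {K : NNReal}

theorem lipschitzOnWith_comp (hc : IsSegmentIn C c x y) (hf : LipschitzOnWith K f C) :
    LipschitzOnWith K (f ∘ c) (Icc 0 (dist x y)) :=
  LipschitzOnWith.of_dist_le_mul fun s hs t ht => by
    rw [Real.dist_eq, ← hc.2.2.2 s hs t ht]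
    exact hf.dist_le_mul _ (hc.2.2.1 s hs) _ (hc.2.2.1 t ht)

theorem slope_le (hc : IsSegmentIn C c x y) (hf : LipschitzOnWith K f C) {t : ℝ}
    (ht : t ∈ Icc (0 : ℝ) 1) :
    dist (f (c (t * dist x y))) (f x) / (t * dist x y) ≤ K := by
  have htd : t * dist x y ∈ Icc 0 (dist x y) :=
    ⟨mul_nonneg ht.1 dist_nonneg, mul_le_of_le_one_left dist_nonneg ht.2⟩
  refine div_le_of_le_mul₀ htd.1 K.2 ?_
  have := (hc.lipschitzOnWith_comp hf).dist_le_mul _ htd 0 ⟨le_rfl, dist_nonneg⟩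
  rwa [Function.comp_apply, Function.comp_apply, hc.1, Real.dist_eq, sub_zero,
    abs_of_nonneg htd.1] at this

theorem le_liminf_slope (hc : IsSegmentIn C c x y) (hf : LipschitzOnWith K f C) {l : ℝ}
    (hl : ∀ᶠ t in 𝓝[>] 0, l ≤ dist (f (c (t * dist x y))) (f x) / (t * dist x y)) :
    l ≤ liminf (fun t : ℝ => dist (f (c (t * dist x y))) (f x) / (t * dist x y)) (𝓝[>] 0) := by
  have hbdd : ∀ᶠ t in 𝓝[>] (0 : ℝ), dist (f (c (t * dist x y))) (f x) / (t * dist x y) ≤ K := by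
    filter_upwards [Ioo_mem_nhdsGT (one_pos : (0 : ℝ) < 1)] with t ht
    exact hc.slope_le hf ⟨ht.1.le, ht.2.le⟩
  -- without this bound the `liminf` could be a junk value
  exact le_liminf_of_le (isCoboundedUnder_ge_of_eventually_le _ hbdd) hl

end IsSegmentIn

end Segment

theorem stmt10_general {X Y : Type*} [MetricSpace X] [MetricSpace Y]
    (C : Set X)
    (hconv : ∀ x ∈ C, ∀ y ∈ C, ∃ c : ℝ → X, c 0 = x ∧ c (dist x y) = y ∧
      (∀ s ∈ Icc (0 : ℝ) (dist x y), c s ∈ C) ∧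
      ∀ s ∈ Icc (0 : ℝ) (dist x y), ∀ t ∈ Icc (0 : ℝ) (dist x y),
        dist (c s) (c t) = |s - t|)
    (f : X → Y) (K : NNReal) (hf : LipschitzOnWith K f C)
    (L : ℝ)
    (hslope : ∃ x ∈ C, ∃ y ∈ C, L * dist x y < dist (f x) (f y)) :
    ∃ u₀ ∈ C, ∃ u₁ ∈ C, ∃ c : ℝ → X,
      c 0 = u₀ ∧ c (dist u₀ u₁) = u₁ ∧
      (∀ s ∈ Icc (0 : ℝ) (dist u₀ u₁), c s ∈ C) ∧
      (∀ s ∈ Icc (0 : ℝ) (dist u₀ u₁), ∀ t ∈ Icc (0 : ℝ) (dist u₀ u₁),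
        dist (c s) (c t) = |s - t|) ∧
      L < Filter.liminf
        (fun t : ℝ => dist (f (c (t * dist u₀ u₁))) (f u₀) / (t * dist u₀ u₁))
        (nhdsWithin 0 (Ioi 0)) := by
  obtain ⟨x, hx, y, hy, hxy⟩ := hslope
  have hd : 0 < dist x y := dist_pos.2 (by rintro rfl; simp at hxy)
  obtain ⟨l, hLl, hl⟩ := exists_between ((lt_div_iff₀ hd).2 hxy)
  obtain ⟨c, hc⟩ : ∃ c, IsSegmentIn C c x y := hconv x hx y hy
  obtain ⟨s₀, hs₀, hrec⟩ :=
    (hc.lipschitzOnWith_comp hf).continuousOn.exists_mem_Ioc_forall_mem_Ico_mul_lt_dist hd.le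
      (by simpa [hc.1, hc.2.1] using (lt_div_iff₀ hd).1 hl)
  have hs₀d : s₀ ∈ Icc 0 (dist x y) := ⟨hs₀.1.le, hs₀.2⟩
  have hseg := hc.reverse_restrict hs₀d
  refine ⟨c s₀, hc.2.2.1 s₀ hs₀d, x, hx, _, hseg.1, hseg.2.1, hseg.2.2.1, hseg.2.2.2,
    hLl.trans_le (hseg.le_liminf_slope hf ?_)⟩
  filter_upwards [Ioo_mem_nhdsGT (one_pos : (0 : ℝ) < 1)] with t ht
  have hts : 0 < t * s₀ := mul_pos ht.1 hs₀.1
  have hfar := hrec (s₀ - t * s₀) ⟨by linarith [mul_lt_of_lt_one_left hs₀.1 ht.2], by linarith⟩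
  rw [hc.dist_apply_zero hs₀d, le_div_iff₀ hts]
  simp only [Function.comp_apply, sub_sub_cancel] at hfar
  linarith

/-- Let `C` be a nonempty, non-singleton `ρ_X`-convex subset of a geodesic
metric space `X` (each pair of points of `C` is joined by a metric segment lying in `C`),
let `f : X → Y` be Lipschitz on `C` and `0 < L < lip(f|_C)` (expressed by the existence of a
pair of points of `C` with slope `> L`).  Then there are `u₀, u₁ ∈ C` and a metric segment
`c` from `u₀` to `u₁` inside `C` such that
`liminf_{t→0⁺} ρ_Y(f((1-t)u₀ ⊕ t u₁), f(u₀)) / (t·ρ_X(u₀,u₁)) > L`. -/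
theorem stmt10 {X Y : Type*} [MetricSpace X] [MetricSpace Y]
    (C : Set X)
    (hconv : ∀ x ∈ C, ∀ y ∈ C, ∃ c : ℝ → X, c 0 = x ∧ c (dist x y) = y ∧
      (∀ s ∈ Icc (0 : ℝ) (dist x y), c s ∈ C) ∧
      ∀ s ∈ Icc (0 : ℝ) (dist x y), ∀ t ∈ Icc (0 : ℝ) (dist x y),
        dist (c s) (c t) = |s - t|)
    (f : X → Y) (K : NNReal) (hf : LipschitzOnWith K f C)
    (L : ℝ) (hL : 0 < L)
    (hslope : ∃ x ∈ C, ∃ y ∈ C, L * dist x y < dist (f x) (f y)) :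
    ∃ u₀ ∈ C, ∃ u₁ ∈ C, ∃ c : ℝ → X,
      c 0 = u₀ ∧ c (dist u₀ u₁) = u₁ ∧
      (∀ s ∈ Icc (0 : ℝ) (dist u₀ u₁), c s ∈ C) ∧
      (∀ s ∈ Icc (0 : ℝ) (dist u₀ u₁), ∀ t ∈ Icc (0 : ℝ) (dist u₀ u₁),
        dist (c s) (c t) = |s - t|) ∧
      L < Filter.liminf
        (fun t : ℝ => dist (f (c (t * dist u₀ u₁))) (f u₀) / (t * dist u₀ u₁))
        (nhdsWithin 0 (Ioi 0)) :=
  stmt10_general C hconv f K hf L hslope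
end

section
/- Let (Z,d) be a metric space, E ⊆ Z, Ω a set such that W ⊆ ℓ∞(Ω) is a metric space, f : E → W a 1-Lipschitz map, u₀ ∈ E, r > 0 and 0 < q < q' < 1. Suppose L̂(f,x) := sup{ρ(f(y),f(x))/d(x,y) : y ∈ E\{x}} ≤ q for every x ∈ E ∩ B(u₀,r). Then there exist a 1-Lipschitz extension F : Z → ℓ∞(Ω) of f and a number s ∈ (0,r) such that the restriction of F to B(u₀,s) is q'-Lipschitz. -/
/-!
Give each point `z ∈ E` a weight `ℓ z ∈ [0, 1]` bounding the slope of `f` at `z`: `q` near `u₀`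
and `1` elsewhere. The weighted McShane extension `F x = inf_{z ∈ E} f z + ℓ z · d(z, x)` agrees
with `f` on `E` and is `1`-Lipschitz. Near `u₀` only the terms with `z ∈ B(u₀, r)` matter: the
others exceed `f u₀ + q s ≥ F x` once `(1 + q) s ≤ (1 - q) r`, and the remaining terms are
infima of `q`-Lipschitz functions, so `F` is `q`-Lipschitz on `B(u₀, s)`.
-/

open Metric Set

section

variable {Z : Type*} [PseudoMetricSpace Z]

lemma abs_sub_le_mul_dist_of_le_add_mul {s : Set Z} {F : Z → ℝ} {K : ℝ}
    (h : ∀ x ∈ s, ∀ y ∈ s, F x ≤ F y + K * dist x y) {x y : Z} (hx : x ∈ s) (hy : y ∈ s) :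
    |F x - F y| ≤ K * dist x y := by
  have hyx := h y hy x hx
  rw [dist_comm] at hyx
  exact abs_sub_le_iff.mpr ⟨by linarith [h x hx y hy], by linarith⟩

/-- `L̂(g, z) ≤ ℓ z` for every `z ∈ E`. -/
def SlopeBoundedBy (E : Set Z) (g ℓ : Z → ℝ) : Prop :=
  ∀ z ∈ E, ∀ y ∈ E, |g y - g z| ≤ ℓ z * dist z y

noncomputable def slopeExtension (E : Set Z) (g ℓ : Z → ℝ) (x : Z) : ℝ :=
  ⨅ z : E, g z + ℓ z * dist (z : Z) x

lemma le_slopeExtension {E : Set Z} {g ℓ : Z → ℝ} (hE : E.Nonempty) {a : ℝ} {x : Z}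
    (h : ∀ z ∈ E, a ≤ g z + ℓ z * dist z x) : a ≤ slopeExtension E g ℓ x :=
  have := hE.to_subtype
  le_ciInf fun z => h z z.2

namespace SlopeBoundedBy

variable {E : Set Z} {g ℓ : Z → ℝ} (hslope : SlopeBoundedBy E g ℓ)
  (hℓ0 : ∀ z, 0 ≤ ℓ z) (hℓ1 : ∀ z, ℓ z ≤ 1)
include hslope hℓ0 hℓ1

lemma bddBelow_range {u : Z} (hu : u ∈ E) (x : Z) :
    BddBelow (range fun z : E => g z + ℓ z * dist (z : Z) x) := by
  refine ⟨g u - dist u x, ?_⟩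
  rintro _ ⟨⟨z, hz⟩, rfl⟩
  have hgu := (abs_le.mp (hslope z hz u hu)).2
  have htri : dist z u ≤ dist z x + dist u x := dist_triangle_right z u x
  have hℓ : ℓ z * dist u x ≤ dist u x := mul_le_of_le_one_left dist_nonneg (hℓ1 z)
  nlinarith [hℓ0 z]

lemma slopeExtension_le {z : Z} (hz : z ∈ E) (x : Z) :
    slopeExtension E g ℓ x ≤ g z + ℓ z * dist z x :=
  ciInf_le (hslope.bddBelow_range hℓ0 hℓ1 hz x) ⟨z, hz⟩

lemma slopeExtension_eq {x : Z} (hx : x ∈ E) : slopeExtension E g ℓ x = g x := by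
  refine le_antisymm ?_ (le_slopeExtension ⟨x, hx⟩ fun z hz => ?_)
  · simpa using hslope.slopeExtension_le hℓ0 hℓ1 hx x
  · linarith [(abs_le.mp (hslope z hz x hx)).2]

lemma lipschitzWith_one_slopeExtension (hE : E.Nonempty) :
    LipschitzWith 1 (slopeExtension E g ℓ) := by
  refine LipschitzWith.of_le_add fun x y => ?_
  rw [← sub_le_iff_le_add]
  refine le_slopeExtension hE fun z hz => ?_
  have hx := hslope.slopeExtension_le hℓ0 hℓ1 hz x
  have htri : dist z x ≤ dist z y + dist x y := dist_triangle_right z x y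
  have hℓ : ℓ z * dist x y ≤ dist x y := mul_le_of_le_one_left dist_nonneg (hℓ1 z)
  nlinarith [hℓ0 z]

lemma slopeExtension_le_add_mul_dist {u : Z} (hu : u ∈ E) {q r s : ℝ} (hr : 0 < r)
    (hq1 : q ≤ 1) (hnear : ∀ z ∈ E, z ∈ ball u r → ℓ z ≤ q)
    (hfar : ∀ z ∈ E, z ∉ ball u r → ℓ z = 1) (hs : (1 + q) * s ≤ (1 - q) * r)
    {x y : Z} (hx : x ∈ ball u s) (hy : y ∈ ball u s) :
    slopeExtension E g ℓ x ≤ slopeExtension E g ℓ y + q * dist x y := by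
  have hux : dist u x < s := mem_ball'.mp hx
  have huy : dist u y < s := mem_ball'.mp hy
  have hℓu : ℓ u ≤ q := hnear u hu (mem_ball_self hr)
  have hq0 : 0 ≤ q := (hℓ0 u).trans hℓu
  have hFx : slopeExtension E g ℓ x ≤ g u + q * s := by
    have := hslope.slopeExtension_le hℓ0 hℓ1 hu x
    nlinarith [hℓ0 u, dist_nonneg (x := u) (y := x)]
  rw [← sub_le_iff_le_add]
  refine le_slopeExtension ⟨u, hu⟩ fun z hz => ?_
  by_cases hzr : z ∈ ball u r
  · have hFz := hslope.slopeExtension_le hℓ0 hℓ1 hz x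
    have htri : dist z x ≤ dist z y + dist x y := dist_triangle_right z x y
    have hℓz : ℓ z * dist x y ≤ q * dist x y :=
      mul_le_mul_of_nonneg_right (hnear z hz hzr) dist_nonneg
    nlinarith [hℓ0 z]
  · have hruz : r ≤ dist u z := not_lt.mp fun h => hzr (mem_ball'.mpr h)
    have hgz : g u - q * dist u z ≤ g z := by
      have := (abs_le.mp (hslope u hu z hz)).1
      nlinarith [dist_nonneg (x := u) (y := z)]
    have htri : dist u z ≤ dist u y + dist z y := dist_triangle_right u z y
    rw [hfar z hz hzr, one_mul]
    nlinarith [dist_nonneg (x := x) (y := y)]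

end SlopeBoundedBy

end

/-- extension lemma: Let `E ⊆ Z`, `f : E → W ⊆ ℓ∞(Ω)` be `1`-Lipschitz
(componentwise, with the sup metric), `u₀ ∈ E`, `r > 0` and `0 < q < q' < 1`.  If the
pointwise global slope satisfies `L̂(f,x) ≤ q` for every `x ∈ E ∩ B(u₀,r)` (i.e.
`dist(f(y),f(x)) ≤ q·d(x,y)` for such `x` and all `y ∈ E`), then there exist a `1`-Lipschitz
extension `F : Z → ℓ∞(Ω)` of `f` and `s ∈ (0,r)` such that `F` restricted to `B(u₀,s)` is
`q'`-Lipschitz. -/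
theorem stmt13 {Z : Type*} [MetricSpace Z] {Ω : Type*}
    (E : Set Z) (f : Z → Ω → ℝ)
    (hf : ∀ x ∈ E, ∀ y ∈ E, ∀ ω : Ω, |f x ω - f y ω| ≤ dist x y)
    (u₀ : Z) (hu₀ : u₀ ∈ E) (r : ℝ) (hr : 0 < r)
    (q q' : ℝ) (hq : 0 < q) (hqq' : q < q') (hq' : q' < 1)
    (hsmall : ∀ x ∈ E ∩ ball u₀ r, ∀ y ∈ E, ∀ ω : Ω,
      |f y ω - f x ω| ≤ q * dist x y) :
    ∃ (F : Z → Ω → ℝ) (s : ℝ), 0 < s ∧ s < r ∧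
      (∀ x ∈ E, F x = f x) ∧
      (∀ x y : Z, ∀ ω : Ω, |F x ω - F y ω| ≤ dist x y) ∧
      (∀ x ∈ ball u₀ s, ∀ y ∈ ball u₀ s, ∀ ω : Ω,
        |F x ω - F y ω| ≤ q' * dist x y) := by
  classical
  have hq1 : q < 1 := hqq'.trans hq'
  set ℓ : Z → ℝ := fun z => if z ∈ ball u₀ r then q else 1
  have hℓnear {z : Z} (hz : z ∈ ball u₀ r) : ℓ z = q := if_pos hz
  have hℓfar {z : Z} (hz : z ∉ ball u₀ r) : ℓ z = 1 := if_neg hz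
  have hℓ0 : ∀ z, 0 ≤ ℓ z := fun z => by dsimp only [ℓ]; split_ifs <;> linarith
  have hℓ1 : ∀ z, ℓ z ≤ 1 := fun z => by dsimp only [ℓ]; split_ifs <;> linarith
  have hslope (ω : Ω) : SlopeBoundedBy E (f · ω) ℓ := fun z hz y hy => by
    by_cases hzr : z ∈ ball u₀ r
    · rw [hℓnear hzr]; exact hsmall z ⟨hz, hzr⟩ y hy ω
    · rw [hℓfar hzr, one_mul, abs_sub_comm]; exact hf z hz y hy ω
  set s := (1 - q) * r / (1 + q)
  have hs : (1 + q) * s = (1 - q) * r := mul_div_cancel₀ _ (by positivity)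
  refine ⟨fun x ω => slopeExtension E (f · ω) ℓ x, s, by positivity, by nlinarith,
    fun x hx => funext fun ω => (hslope ω).slopeExtension_eq hℓ0 hℓ1 hx,
    fun x y ω => ?_, fun x hx y hy ω => ?_⟩
  · simpa [← Real.dist_eq] using
      ((hslope ω).lipschitzWith_one_slopeExtension hℓ0 hℓ1 ⟨u₀, hu₀⟩).dist_le_mul x y
  · calc _ ≤ q * dist x y := abs_sub_le_mul_dist_of_le_add_mul
          (fun x hx y hy => (hslope ω).slopeExtension_le_add_mul_dist hℓ0 hℓ1 hu₀ hr hq1.le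
            (fun _ _ hz => (hℓnear hz).le) (fun _ _ hz => hℓfar hz) hs.le hx hy) hx hy
      _ ≤ q' * dist x y := by gcongr
end

section
/- Under the hypotheses of the modified Lipschitz extension F_ω(y) := inf{f_ω(z) + L̂(f_ω,z)d(z,y) : z ∈ E}, where f : E → ℓ∞(Ω) is 1-Lipschitz and L̂(f,x) ≤ q on E ∩ B(u₀,r) for some u₀ ∈ E, r > 0, q ∈ (0,1), fix q' ∈ (q,1) and choose N > 1 such that (n+1)/(n-1) ≤ q'/q for all n ≥ N. Then for every y ∈ B(u₀,r/N), every z ∈ E and every ω ∈ Ω, at least one of the following holds: (i) f_ω(z) + L̂(f_ω,z)d(z,y) > f_ω(u₀) + L̂(f_ω,u₀)d(u₀,y), or (ii) L̂(f_ω,z) ≤ q'. -/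
open Metric Set

/-- dichotomy claim: With `f : E → ℓ∞(Ω)` `1`-Lipschitz (componentwise),
`L̂(f_ω,z) = sup{|f_ω(y)-f_ω(z)|/d(z,y) : y ∈ E \ {z}}`, `u₀ ∈ E`, `r > 0`, `q ∈ (0,1)` with
`L̂(f_ω,x) ≤ q` for all `x ∈ E ∩ B(u₀,r)` and `ω`, fix `q' ∈ (q,1)` and `N > 1` with
`(n+1)/(n-1) ≤ q'/q` for all `n ≥ N`.  Then for every `y ∈ B(u₀, r/N)`, `z ∈ E`, `ω ∈ Ω`,
either `f_ω(z) + L̂(f_ω,z)d(z,y) > f_ω(u₀) + L̂(f_ω,u₀)d(u₀,y)` or `L̂(f_ω,z) ≤ q'`. -/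
theorem stmt14 {Z : Type*} [MetricSpace Z] {Ω : Type*}
    (E : Set Z) (f : Z → Ω → ℝ)
    (hf : ∀ x ∈ E, ∀ y ∈ E, ∀ ω : Ω, |f x ω - f y ω| ≤ dist x y)
    (Lhat : Ω → Z → ℝ)
    (hLhat : ∀ ω z, Lhat ω z =
      sSup {s : ℝ | ∃ y ∈ E, y ≠ z ∧ s = |f y ω - f z ω| / dist z y})
    (u₀ : Z) (hu₀ : u₀ ∈ E) (r : ℝ) (hr : 0 < r)
    (q q' : ℝ) (hq0 : 0 < q) (hq1 : q < 1) (hqq' : q < q') (hq' : q' < 1)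
    (hsmall : ∀ x ∈ E ∩ ball u₀ r, ∀ ω : Ω, Lhat ω x ≤ q)
    (N : ℝ) (hN : 1 < N)
    (hNratio : ∀ n : ℝ, N ≤ n → (n + 1) / (n - 1) ≤ q' / q) :
    ∀ y ∈ ball u₀ (r / N), ∀ z ∈ E, ∀ ω : Ω,
      f u₀ ω + Lhat ω u₀ * dist u₀ y < f z ω + Lhat ω z * dist z y ∨
        Lhat ω z ≤ q' := by
  intro y hy z hz ω
  by_cases hq'z : Lhat ω z ≤ q'
  · exact Or.inr hq'z
  push_neg at hq'z
  left
  -- z is far from u₀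
  have hzfar : r ≤ dist z u₀ := by
    by_contra h
    push_neg at h
    exact absurd (hsmall z ⟨hz, mem_ball.mpr h⟩ ω) (by linarith)
  set D := dist u₀ z with hD
  have hDz : dist z u₀ = D := dist_comm z u₀
  have hrD : r ≤ D := hDz ▸ hzfar
  set δ := dist u₀ y with hδdef
  have hyball : δ < r / N := by
    have := mem_ball.mp hy
    rwa [dist_comm] at this
  have hδ0 : 0 ≤ δ := dist_nonneg
  have hD0 : 0 < D := lt_of_lt_of_le hr hrD
  have hzne : z ≠ u₀ := by
    intro h
    rw [h, dist_self] at hD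
    linarith
  -- Lhat ω u₀ bound and key1
  have hbdd : BddAbove {s : ℝ | ∃ y ∈ E, y ≠ u₀ ∧ s = |f y ω - f u₀ ω| / dist u₀ y} := by
    refine ⟨1, fun s hs => ?_⟩
    obtain ⟨w, hwE, hwne, rfl⟩ := hs
    have hdw : 0 < dist u₀ w := dist_pos.mpr (Ne.symm hwne)
    rw [div_le_one hdw]
    calc |f w ω - f u₀ ω| ≤ dist w u₀ := hf w hwE u₀ hu₀ ω
      _ = dist u₀ w := dist_comm w u₀
  have hmem : |f z ω - f u₀ ω| / dist u₀ z ∈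
      {s : ℝ | ∃ y ∈ E, y ≠ u₀ ∧ s = |f y ω - f u₀ ω| / dist u₀ y} :=
    ⟨z, hz, hzne, rfl⟩
  have hLu₀q : Lhat ω u₀ ≤ q := hsmall u₀ ⟨hu₀, mem_ball_self hr⟩ ω
  have hkey1 : |f z ω - f u₀ ω| ≤ q * D := by
    have h1 : |f z ω - f u₀ ω| / D ≤ Lhat ω u₀ := by
      rw [hLhat ω u₀]; exact le_csSup hbdd hmem
    have := le_trans h1 hLu₀q
    calc |f z ω - f u₀ ω| = |f z ω - f u₀ ω| / D * D := by field_simp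
      _ ≤ q * D := mul_le_mul_of_nonneg_right this hD0.le
  -- key2 : q * (D + δ) ≤ q' * (D - δ)
  have hkey2 : q * (D + δ) ≤ q' * (D - δ) := by
    rcases eq_or_lt_of_le hδ0 with h0 | hδpos
    · rw [← h0]
      simp only [add_zero, sub_zero]
      exact mul_le_mul_of_nonneg_right hqq'.le hD0.le
    · have hN0 : 0 < N := lt_trans zero_lt_one hN
      have hn : N ≤ D / δ := by
        rw [le_div_iff₀ hδpos]
        have : δ * N < r := by
          have := mul_lt_mul_of_pos_right hyball hN0
          rwa [div_mul_cancel₀ r (ne_of_gt hN0)] at this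
        linarith
      have h1 := hNratio (D / δ) hn
      have hd1 : 0 < D / δ - 1 := by linarith [lt_of_lt_of_le hN hn]
      rw [div_le_div_iff₀ hd1 hq0] at h1
      have hcan : D / δ * δ = D := div_mul_cancel₀ D (ne_of_gt hδpos)
      nlinarith [mul_le_mul_of_nonneg_right h1 hδpos.le]
  -- triangle
  have htri : D - δ ≤ dist z y := by
    have : dist u₀ z ≤ dist u₀ y + dist y z := dist_triangle u₀ y z
    have h2 : dist y z = dist z y := dist_comm y z
    linarith [this, h2 ▸ this]
  have hzy0 : 0 < dist z y := by
    have : δ < r := lt_of_lt_of_le hyball (by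
      rw [div_le_iff₀ (lt_trans zero_lt_one hN)]; nlinarith)
    linarith
  -- combine
  have h3 : q' * dist z y < Lhat ω z * dist z y :=
    mul_lt_mul_of_pos_right hq'z hzy0
  have h4 : q' * (D - δ) ≤ q' * dist z y :=
    mul_le_mul_of_nonneg_left htri (by linarith)
  have h5 : Lhat ω u₀ * δ ≤ q * δ := mul_le_mul_of_nonneg_right hLu₀q hδ0
  have h6 : f u₀ ω - f z ω ≤ q * D := (abs_sub_le_iff.mp hkey1).2
  nlinarith
end

section
/- Let (X,ρ) be a hyperbolic space, C ⊆ X, c ∈ star(C), λ ∈ [0,1], and let A, B be nonempty closed bounded subsets of C. Then h((1-λ)A ⊕ λ{c}, (1-λ)B ⊕ λ{c}) ≤ (1-λ)·h(A,B), where (1-λ)E ⊕ λ{c} denotes the closure of {(1-λ)e ⊕ λc : e ∈ E} and h is the Pompeiu–Hausdorff metric. -/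
open Metric Set

/-! The hyperbolic inequality with `y = z = c` says that `x ↦ (1-λ)x ⊕ λc` is
`(1-λ)`-Lipschitz, and a `K`-Lipschitz map scales Hausdorff distances by at most `K`;
taking closures does not change Hausdorff distances. -/

namespace LipschitzWith

variable {α β : Type*} [PseudoMetricSpace α] [PseudoMetricSpace β] {K : NNReal} {f : α → β}

theorem infDist_image_le (hf : LipschitzWith K f) (x : α) (t : Set α) :
    infDist (f x) (f '' t) ≤ K * infDist x t := by
  rcases t.eq_empty_or_nonempty with rfl | ht
  · simp
  have : Nonempty t := ht.to_subtype
  rw [infDist_eq_iInf (x := x), Real.mul_iInf_of_nonneg K.coe_nonneg]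
  exact le_ciInf fun y => (infDist_le_dist_of_mem (mem_image_of_mem f y.2)).trans
    (hf.dist_le_mul x y)

theorem hausdorffDist_image_le (hf : LipschitzWith K f) {s t : Set α}
    (hst : hausdorffEDist s t ≠ ⊤) :
    hausdorffDist (f '' s) (f '' t) ≤ K * hausdorffDist s t := by
  have image_le : ∀ {u v : Set α}, hausdorffEDist u v ≠ ⊤ →
      ∀ x ∈ u, infDist (f x) (f '' v) ≤ K * hausdorffDist u v := fun huv x hx =>
    (hf.infDist_image_le x _).trans
      (mul_le_mul_of_nonneg_left (infDist_le_hausdorffDist_of_mem hx huv) K.coe_nonneg)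
  refine hausdorffDist_le_of_infDist (mul_nonneg K.coe_nonneg hausdorffDist_nonneg) ?_ ?_
  · exact forall_mem_image.2 (image_le hst)
  · rw [hausdorffDist_comm]
    exact forall_mem_image.2 (image_le (by rwa [hausdorffEDist_comm]))

end LipschitzWith

theorem lipschitzWith_combination_const {X : Type*} [PseudoMetricSpace X] (W : X → X → ℝ → X)
    (hWhyp : ∀ x y w z : X, ∀ t ∈ Icc (0 : ℝ) 1,
      dist (W x y t) (W w z t) ≤ (1 - t) * dist x w + t * dist y z)
    (c : X) {t : ℝ} (ht : t ∈ Icc (0 : ℝ) 1) :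
    LipschitzWith (1 - t).toNNReal (fun x => W x c t) :=
  LipschitzWith.of_dist_le_mul fun x y => by
    simpa [Real.coe_toNNReal _ (sub_nonneg.2 ht.2)] using hWhyp x c y c t ht

theorem stmt19_general {X : Type*} [MetricSpace X]
    (W : X → X → ℝ → X)
    (hWhyp : ∀ x y w z : X, ∀ t ∈ Icc (0 : ℝ) 1,
      dist (W x y t) (W w z t) ≤ (1 - t) * dist x w + t * dist y z)
    (c : X)
    (A B : Set X)
    (hAne : A.Nonempty) (hBne : B.Nonempty)
    (hAbd : Bornology.IsBounded A) (hBbd : Bornology.IsBounded B)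
    (lam : ℝ) (hlam : lam ∈ Icc (0 : ℝ) 1) :
    hausdorffDist (closure ((fun a => W a c lam) '' A))
        (closure ((fun b => W b c lam) '' B)) ≤
      (1 - lam) * hausdorffDist A B := by
  rw [hausdorffDist_closure, ← Real.coe_toNNReal _ (sub_nonneg.2 hlam.2)]
  exact (lipschitzWith_combination_const W hWhyp c hlam).hausdorffDist_image_le
    (hausdorffEDist_ne_top_of_nonempty_of_bounded hAne hBne hAbd hBbd)

/-- Let `X` be a hyperbolic space with convex-combination map
`W x y t = (1-t)x ⊕ t y` satisfying the metric-segment identities and the hyperbolic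
inequality, let `C ⊆ X` be star-shaped with respect to `c`, `λ ∈ [0,1]`, and let `A, B` be
nonempty, closed and bounded subsets of `C`.  Then, with
`(1-λ)E ⊕ λ{c} := closure {(1-λ)e ⊕ λc : e ∈ E}` and `h` the Pompeiu–Hausdorff metric,
`h((1-λ)A ⊕ λ{c}, (1-λ)B ⊕ λ{c}) ≤ (1-λ)·h(A,B)`. -/
theorem stmt19 {X : Type*} [MetricSpace X]
    (W : X → X → ℝ → X)
    (hW0 : ∀ x y : X, ∀ t ∈ Icc (0 : ℝ) 1, dist x (W x y t) = t * dist x y)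
    (hW1 : ∀ x y : X, ∀ t ∈ Icc (0 : ℝ) 1, dist (W x y t) y = (1 - t) * dist x y)
    (hWhyp : ∀ x y w z : X, ∀ t ∈ Icc (0 : ℝ) 1,
      dist (W x y t) (W w z t) ≤ (1 - t) * dist x w + t * dist y z)
    (C : Set X) (c : X) (hc : c ∈ C)
    (hstar : ∀ x ∈ C, ∀ t ∈ Icc (0 : ℝ) 1, W x c t ∈ C)
    (A B : Set X) (hAC : A ⊆ C) (hBC : B ⊆ C)
    (hAne : A.Nonempty) (hBne : B.Nonempty)
    (hAcl : IsClosed A) (hBcl : IsClosed B)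
    (hAbd : Bornology.IsBounded A) (hBbd : Bornology.IsBounded B)
    (lam : ℝ) (hlam : lam ∈ Icc (0 : ℝ) 1) :
    hausdorffDist (closure ((fun a => W a c lam) '' A))
        (closure ((fun b => W b c lam) '' B)) ≤
      (1 - lam) * hausdorffDist A B :=
  stmt19_general W hWhyp c A B hAne hBne hAbd hBbd lam hlam
end
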